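/- arXiv:1703.08908 — 2 statements merged into one kernel-verified Lean document; each statement's English description precedes it below -/
import Mathlib

section
/- Let n ≥ 1. Let X be a topological space, Φ : S^n → X a continuous map, and f : S^{n+1} → S^n a continuous map that is not nullhomotopic. Suppose G : B^{n+2} → X is a continuous map whose restriction to the boundary sphere S^{n+1} equals Φ ∘ f. Then there exists no continuous map H : G(B^{n+2}) → S^n defined on the image G(B^{n+2}) ⊆ X (with its subspace topology) satisfying H(Φ(x)) = x for all x ∈ S^n. -/
/-!
On the boundary sphere `H ∘ G = H ∘ Φ ∘ f = f`, so `f` factors through the contractible ball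
`B^{n+2}` and is therefore nullhomotopic.
-/

open Metric

namespace ContinuousMap

variable {A B X Y : Type*} [TopologicalSpace A] [TopologicalSpace B] [TopologicalSpace X]
  [TopologicalSpace Y]

theorem Nullhomotopic.of_comp_eq [ContractibleSpace B] {f : C(A, Y)} (g : C(B, Y)) (i : C(A, B))
    (h : g.comp i = f) : f.Nullhomotopic := by
  subst h
  simpa using ((id_nullhomotopic B).comp_left i).comp_right g

theorem nullhomotopic_of_leftInverse_on_range [ContractibleSpace B] {f : C(A, Y)} {Φ : C(Y, X)}
    {G : C(B, X)} (i : C(A, B)) (hG : G.comp i = Φ.comp f) (H : C(Set.range G, Y))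
    (hH : ∀ (y : Y) (hy : Φ y ∈ Set.range G), H ⟨Φ y, hy⟩ = y) : f.Nullhomotopic := by
  refine Nullhomotopic.of_comp_eq (H.comp ⟨Set.rangeFactorization G, by fun_prop⟩) i ?_
  ext a
  have hGi : G (i a) = Φ (f a) := congr($hG a)
  simp only [comp_apply, coe_mk, Set.rangeFactorization, hGi]
  exact hH (f a) _

end ContinuousMap

theorem no_retraction_on_image_general (n : ℕ) (X : Type*) [TopologicalSpace X]
    (Φ : C(sphere (0 : EuclideanSpace ℝ (Fin (n + 1))) 1, X))
    (f : C(sphere (0 : EuclideanSpace ℝ (Fin (n + 2))) 1,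
      sphere (0 : EuclideanSpace ℝ (Fin (n + 1))) 1))
    (hf : ¬ f.Nullhomotopic)
    (G : C(closedBall (0 : EuclideanSpace ℝ (Fin (n + 2))) 1, X))
    (hG : ∀ x : sphere (0 : EuclideanSpace ℝ (Fin (n + 2))) 1,
      G ⟨x, sphere_subset_closedBall x.2⟩ = Φ (f x)) :
    ¬ ∃ H : C(Set.range G, sphere (0 : EuclideanSpace ℝ (Fin (n + 1))) 1),
        ∀ (x : sphere (0 : EuclideanSpace ℝ (Fin (n + 1))) 1) (hx : Φ x ∈ Set.range G),
          H ⟨Φ x, hx⟩ = x := by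
  rintro ⟨H, hH⟩
  have : ContractibleSpace (closedBall (0 : EuclideanSpace ℝ (Fin (n + 2))) 1) :=
    contractibleSpace_closedBall zero_le_one
  exact hf <| ContinuousMap.nullhomotopic_of_leftInverse_on_range
    ⟨Set.inclusion sphere_subset_closedBall, continuous_inclusion _⟩ (ContinuousMap.ext hG) H hH

/-- If `f : S^{n+1} → S^n` is continuous and not nullhomotopic, `Φ : S^n → X` is continuous, and
`G : B^{n+2} → X` is a continuous map restricting to `Φ ∘ f` on the boundary sphere, then there
is no continuous map `H` on the image `G(B^{n+2})` with `H (Φ x) = x` for all `x ∈ S^n`. -/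
theorem no_retraction_on_image (n : ℕ) (hn : 1 ≤ n) (X : Type*) [TopologicalSpace X]
    (Φ : C(sphere (0 : EuclideanSpace ℝ (Fin (n + 1))) 1, X))
    (f : C(sphere (0 : EuclideanSpace ℝ (Fin (n + 2))) 1,
      sphere (0 : EuclideanSpace ℝ (Fin (n + 1))) 1))
    (hf : ¬ f.Nullhomotopic)
    (G : C(closedBall (0 : EuclideanSpace ℝ (Fin (n + 2))) 1, X))
    (hG : ∀ x : sphere (0 : EuclideanSpace ℝ (Fin (n + 2))) 1,
      G ⟨x, sphere_subset_closedBall x.2⟩ = Φ (f x)) :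
    ¬ ∃ H : C(Set.range G, sphere (0 : EuclideanSpace ℝ (Fin (n + 1))) 1),
        ∀ (x : sphere (0 : EuclideanSpace ℝ (Fin (n + 1))) 1) (hx : Φ x ∈ Set.range G),
          H ⟨Φ x, hx⟩ = x :=
  no_retraction_on_image_general n X Φ f hf G hG
end

section
/- Let n ≥ 2 and let X be a metric space. Suppose: (i) every Lipschitz map G : B^{n+2} → X satisfies H^{n+2}(G(B^{n+2})) = 0, where H^{n+2} denotes the (n+2)-dimensional Hausdorff measure on X (pure unrectifiability); and (ii) for every subset E ⊆ X with H^{n+2}(E) = 0, every compact subset C ⊆ E, and every continuous map h : C → S^n, there exists a continuous extension H : E → S^n of h (the extension property implied by Gromov's dimension bound together with the Hurewicz–Wallman characterization of topological dimension). Let Φ : S^n → X be a bi-Lipschitz embedding and let f : S^{n+1} → S^n be a continuous map that is not nullhomotopic. Then the Lipschitz map Φ ∘ f : S^{n+1} → X admits no Lipschitz extension G : B^{n+2} → X, i.e., there is no Lipschitz map G on the closed unit ball B^{n+2} ⊂ ℝ^{n+2} whose restriction to the boundary sphere S^{n+1} equals Φ ∘ f. -/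
open Metric MeasureTheory NNReal Topology

/-!
If `G : B^{n+2} → X` were a Lipschitz extension of `Φ ∘ f`, its image `E = G(B^{n+2})` would be
`H^{n+2}`-null by pure unrectifiability. Its boundary part `C = G(S^{n+1}) = Φ(f(S^{n+1}))` is
compact, and `Φ⁻¹ : C → S^n` is continuous since `Φ` is bi-Lipschitz; by the extension property it
extends to a continuous `H : E → S^n`. Then `H ∘ G : B^{n+2} → S^n` extends `f`, and since the ball
is contractible, `f` would be nullhomotopic.
-/

theorem ContinuousMap.nullhomotopic_of_extends_to_closedBall {E Y : Type*}
    [NormedAddCommGroup E] [NormedSpace ℝ E] [TopologicalSpace Y] {x : E} {r : ℝ} (hr : 0 ≤ r)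
    {f : C(sphere x r, Y)} (g : C(closedBall x r, Y))
    (hgf : ∀ y : sphere x r, g ⟨y, sphere_subset_closedBall y.2⟩ = f y) : f.Nullhomotopic := by
  have := contractibleSpace_closedBall (x := x) hr
  have hf : f = g.comp ⟨Set.inclusion sphere_subset_closedBall, continuous_inclusion _⟩ := by
    ext1 y
    exact (hgf y).symm
  rw [hf]
  exact ((id_nullhomotopic _).comp_right g).comp_left _

theorem Topology.IsEmbedding.exists_continuousMap_rightInvOn {S X : Type*} [TopologicalSpace S]
    [TopologicalSpace X] {Φ : S → X} (hΦ : IsEmbedding Φ) {C : Set X} (hC : C ⊆ Set.range Φ) :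
    ∃ h : C(C, S), ∀ c, Φ (h c) = c :=
  ⟨⟨fun c => hΦ.toHomeomorph.symm ⟨c, hC c.2⟩, by fun_prop⟩,
    fun c => congrArg Subtype.val (hΦ.toHomeomorph.apply_symm_apply _)⟩

theorem isEmbedding_of_biLipschitz {α β : Type*} [MetricSpace α] [MetricSpace β] {Φ : α → β}
    {L : ℝ} (hL : 0 < L)
    (hΦ : ∀ x y, L⁻¹ * dist x y ≤ dist (Φ x) (Φ y) ∧ dist (Φ x) (Φ y) ≤ L * dist x y) :
    IsEmbedding Φ := by
  have hanti : AntilipschitzWith ⟨L, hL.le⟩ Φ := .of_le_mul_dist fun x y =>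
    calc dist x y = L * (L⁻¹ * dist x y) := by field_simp
      _ ≤ L * dist (Φ x) (Φ y) := by gcongr; exact (hΦ x y).1
  have hlip : LipschitzWith ⟨L, hL.le⟩ Φ := .of_dist_le_mul fun x y => (hΦ x y).2
  exact (hanti.isUniformEmbedding hlip.uniformContinuous).isEmbedding

theorem no_lipschitz_extension_of_unrectifiable_general (n : ℕ)
    (X : Type*) [MetricSpace X] [MeasurableSpace X] [BorelSpace X]
    (hi : ∀ (K : ℝ≥0) (G : closedBall (0 : EuclideanSpace ℝ (Fin (n + 2))) 1 → X),
      LipschitzWith K G → μH[(n + 2 : ℝ)] (Set.range G) = 0)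
    (hii : ∀ E : Set X, μH[(n + 2 : ℝ)] E = 0 → ∀ C : Set X, C ⊆ E → IsCompact C →
      ∀ h : C(C, sphere (0 : EuclideanSpace ℝ (Fin (n + 1))) 1),
        ∃ H : C(E, sphere (0 : EuclideanSpace ℝ (Fin (n + 1))) 1),
          ∀ (x : X) (hxC : x ∈ C) (hxE : x ∈ E), H ⟨x, hxE⟩ = h ⟨x, hxC⟩)
    (Φ : sphere (0 : EuclideanSpace ℝ (Fin (n + 1))) 1 → X)
    (L : ℝ) (hL : 1 ≤ L)
    (hΦ : ∀ x y : sphere (0 : EuclideanSpace ℝ (Fin (n + 1))) 1,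
      L⁻¹ * dist x y ≤ dist (Φ x) (Φ y) ∧ dist (Φ x) (Φ y) ≤ L * dist x y)
    (f : C(sphere (0 : EuclideanSpace ℝ (Fin (n + 2))) 1,
      sphere (0 : EuclideanSpace ℝ (Fin (n + 1))) 1))
    (hf : ¬ f.Nullhomotopic) :
    ¬ ∃ (K : ℝ≥0) (G : closedBall (0 : EuclideanSpace ℝ (Fin (n + 2))) 1 → X),
        LipschitzWith K G ∧
        ∀ x : sphere (0 : EuclideanSpace ℝ (Fin (n + 2))) 1,
          G ⟨x, sphere_subset_closedBall x.2⟩ = Φ (f x) := by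
  rintro ⟨K, G, hG, hGΦ⟩
  have hΦemb : IsEmbedding Φ := isEmbedding_of_biLipschitz (one_pos.trans_le hL) hΦ
  let ι : C(sphere (0 : EuclideanSpace ℝ (Fin (n + 2))) 1, closedBall _ 1) :=
    ⟨Set.inclusion sphere_subset_closedBall, continuous_inclusion _⟩
  have hCΦ : Set.range (G ∘ ι) ⊆ Set.range Φ := by
    rintro _ ⟨x, rfl⟩
    exact ⟨f x, (hGΦ x).symm⟩
  obtain ⟨h, hΦh⟩ := hΦemb.exists_continuousMap_rightInvOn hCΦ
  obtain ⟨H, hHh⟩ := hii _ (hi K G hG) _ (Set.range_comp_subset_range _ _)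
    (isCompact_range (hG.continuous.comp ι.continuous)) h
  refine hf <| ContinuousMap.nullhomotopic_of_extends_to_closedBall zero_le_one
    (H.comp ⟨Set.rangeFactorization G, hG.continuous.subtype_mk _⟩) fun x => hΦemb.injective ?_
  calc Φ (H ⟨G (ι x), _⟩) = G (ι x) := by rw [hHh (G (ι x)) ⟨x, rfl⟩, hΦh]
    _ = Φ (f x) := hGΦ x

/-- Abstract form of the main theorem: if `X` is a metric space such that (i) Lipschitz images of
`B^{n+2}` are `H^{n+2}`-null, and (ii) continuous maps into `S^n` from compact subsets of
`H^{n+2}`-null sets extend continuously to the whole null set, `Φ : S^n → X` is a bi-Lipschitz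
embedding, and `f : S^{n+1} → S^n` is continuous and not nullhomotopic, then `Φ ∘ f` admits no
Lipschitz extension `G : B^{n+2} → X`. -/
theorem no_lipschitz_extension_of_unrectifiable (n : ℕ) (hn : 2 ≤ n)
    (X : Type*) [MetricSpace X] [MeasurableSpace X] [BorelSpace X]
    (hi : ∀ (K : ℝ≥0) (G : closedBall (0 : EuclideanSpace ℝ (Fin (n + 2))) 1 → X),
      LipschitzWith K G → μH[(n + 2 : ℝ)] (Set.range G) = 0)
    (hii : ∀ E : Set X, μH[(n + 2 : ℝ)] E = 0 → ∀ C : Set X, C ⊆ E → IsCompact C →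
      ∀ h : C(C, sphere (0 : EuclideanSpace ℝ (Fin (n + 1))) 1),
        ∃ H : C(E, sphere (0 : EuclideanSpace ℝ (Fin (n + 1))) 1),
          ∀ (x : X) (hxC : x ∈ C) (hxE : x ∈ E), H ⟨x, hxE⟩ = h ⟨x, hxC⟩)
    (Φ : sphere (0 : EuclideanSpace ℝ (Fin (n + 1))) 1 → X)
    (L : ℝ) (hL : 1 ≤ L)
    (hΦ : ∀ x y : sphere (0 : EuclideanSpace ℝ (Fin (n + 1))) 1,
      L⁻¹ * dist x y ≤ dist (Φ x) (Φ y) ∧ dist (Φ x) (Φ y) ≤ L * dist x y)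
    (f : C(sphere (0 : EuclideanSpace ℝ (Fin (n + 2))) 1,
      sphere (0 : EuclideanSpace ℝ (Fin (n + 1))) 1))
    (hf : ¬ f.Nullhomotopic) :
    ¬ ∃ (K : ℝ≥0) (G : closedBall (0 : EuclideanSpace ℝ (Fin (n + 2))) 1 → X),
        LipschitzWith K G ∧
        ∀ x : sphere (0 : EuclideanSpace ℝ (Fin (n + 2))) 1,
          G ⟨x, sphere_subset_closedBall x.2⟩ = Φ (f x) :=
  no_lipschitz_extension_of_unrectifiable_general n X hi hii Φ L hL hΦ f hf
end
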